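/- Let x₁, x₂, x₃ ∈ ℝ with x₁x₂ and x₃ both nonzero and of the same sign, and let δ ∈ ℝ with |δ| ≤ ε for some ε > 0. Define b(x₁,x₂,x₃) = (x₁, x₃/x₁). Then x₁ · (x₃/x₁) = x₃ exactly, the first component of b is unchanged (x₁ carries zero backward error), and RP(x₂, x₃/x₁) ≤ RP(x₁x₂e^δ, x₃) + ε. -/

import Mathlib

/-! The backward map divides the output by the exact factor `x₁`. Since `RP` is invariant under
rescaling both arguments by the same nonzero constant, the error of `x₂` against `x₃ / x₁` equals
that of `x₁ x₂` against `x₃`; and perturbing the first argument by a factor `e^δ` shifts the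
logarithm in `RP` by exactly `δ`, so it changes `RP` by at most `|δ| ≤ ε`. -/

open scoped ENNReal

/-- Olver's relative precision metric: `|ln(x/y)|` when `x` and `y` are
nonzero with the same sign, `0` when `x = y = 0`, and `∞` otherwise. -/
noncomputable def RP (x y : ℝ) : ℝ≥0∞ :=
  if 0 < x * y then ENNReal.ofReal |Real.log (x / y)|
  else if x = 0 ∧ y = 0 then 0
  else ⊤

open Real

theorem RP_self (x : ℝ) : RP x x = 0 := by
  rcases eq_or_ne x 0 with rfl | hx
  · simp [RP]
  · simp [RP, mul_self_pos.mpr hx, div_self hx]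

theorem RP_mul_mul_left {c : ℝ} (hc : c ≠ 0) (x y : ℝ) : RP (c * x) (c * y) = RP x y := by
  have hpos : 0 < c * x * (c * y) ↔ 0 < x * y := by
    rw [show c * x * (c * y) = (c * c) * (x * y) by ring,
      mul_pos_iff_of_pos_left (mul_self_pos.mpr hc)]
  simp only [RP, hpos, mul_div_mul_left x y hc, mul_eq_zero, hc, false_or]

theorem RP_le_RP_mul_exp_add (x y δ : ℝ) :
    RP x y ≤ RP (x * exp δ) y + ENNReal.ofReal |δ| := by
  by_cases hxy : 0 < x * y
  · have hxy' : 0 < x * exp δ * y := by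
      rw [mul_right_comm]; exact mul_pos hxy (exp_pos δ)
    have hlog : log (x * exp δ / y) = log (x / y) + δ := by
      rw [mul_div_right_comm, log_mul (div_ne_zero (left_ne_zero_of_mul hxy.ne')
        (right_ne_zero_of_mul hxy.ne')) (exp_ne_zero δ), log_exp]
    rw [RP, RP, if_pos hxy, if_pos hxy', hlog, ← ENNReal.ofReal_add (abs_nonneg _) (abs_nonneg _)]
    apply ENNReal.ofReal_le_ofReal
    simpa using abs_sub (log (x / y) + δ) δ
  · -- off the open quadrant, `RP` only sees whether `x = 0`, which `e^δ > 0` does not change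
    have hxy' : ¬ 0 < x * exp δ * y := by
      rwa [mul_right_comm, mul_pos_iff_of_pos_right (exp_pos δ)]
    have hRP : RP (x * exp δ) y = RP x y := by
      simp only [RP, hxy, hxy', if_false, mul_eq_zero, exp_ne_zero, or_false]
    exact hRP ▸ le_self_add

theorem dmul_lens_backward_general (x₁ x₂ x₃ δ ε : ℝ)
    (hsign : 0 < (x₁ * x₂) * x₃) (hδ : |δ| ≤ ε) :
    x₁ * (x₃ / x₁) = x₃ ∧
    RP x₁ x₁ = 0 ∧
    RP x₂ (x₃ / x₁) ≤ RP (x₁ * x₂ * Real.exp δ) x₃ + ENNReal.ofReal ε := by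
  have hx₁ : x₁ ≠ 0 := left_ne_zero_of_mul (left_ne_zero_of_mul hsign.ne')
  have hexact : x₁ * (x₃ / x₁) = x₃ := mul_div_cancel₀ x₃ hx₁
  refine ⟨hexact, RP_self x₁, ?_⟩
  calc RP x₂ (x₃ / x₁) = RP (x₁ * x₂) x₃ := by rw [← RP_mul_mul_left hx₁, hexact]
    _ ≤ RP (x₁ * x₂ * exp δ) x₃ + ENNReal.ofReal |δ| := RP_le_RP_mul_exp_add _ _ _
    _ ≤ RP (x₁ * x₂ * exp δ) x₃ + ENNReal.ofReal ε := by gcongr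

/-- Backward error lens properties for multiplication by a discrete variable
(the DMul rule): the backward map `b(x₁,x₂,x₃) = (x₁, x₃/x₁)` recovers `x₃`
exactly, the discrete input `x₁` carries zero backward error, and all the
backward error `RP(x₁x₂e^δ, x₃) + ε` is assigned to `x₂`. -/
theorem dmul_lens_backward (x₁ x₂ x₃ δ ε : ℝ)
    (hsign : 0 < (x₁ * x₂) * x₃) (hδ : |δ| ≤ ε) (hε : 0 < ε) :
    x₁ * (x₃ / x₁) = x₃ ∧
    RP x₁ x₁ = 0 ∧
    RP x₂ (x₃ / x₁) ≤ RP (x₁ * x₂ * Real.exp δ) x₃ + ENNReal.ofReal ε :=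
  dmul_lens_backward_general x₁ x₂ x₃ δ ε hsign hδ
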